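/- Let d, d' be integers with 2 ≤ d < d', and let Δ ∈ [-log d, log d]. Then M(Δ, d') ≤ M(Δ, d), and the inequality is strict whenever Δ ≠ 0. -/

import Mathlib

open scoped ENNReal BigOperators

noncomputable section

/-- Binary entropy (natural log), with Lean's convention `Real.log 0 = 0`. -/
def binEntropy' (x : ℝ) : ℝ := -(x * Real.log x) - (1 - x) * Real.log (1 - x)

/-- Binary relative entropy, valued in `[0,∞]`. -/
def binRelEntropy (x y : ℝ) : ℝ≥0∞ :=
  if (y = 0 ∧ 0 < x) ∨ (y = 1 ∧ x < 1) then ⊤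
  else ENNReal.ofReal (x * Real.log (x / y) + (1 - x) * Real.log ((1 - x) / (1 - y)))

/-- `M(Δ,d)`: infimum of binary relative entropies under the entropy-difference constraint. -/
def Mfun (Δ : ℝ) (d : ℕ) : ℝ≥0∞ :=
  sInf {m : ℝ≥0∞ | ∃ s r : ℝ, s ∈ Set.Icc (0:ℝ) (((d:ℝ) - 1) / d) ∧
    r ∈ Set.Icc (0:ℝ) (((d:ℝ) - 1) / d) ∧
    binEntropy' s - binEntropy' r + (s - r) * Real.log ((d:ℝ) - 1) = Δ ∧
    m = binRelEntropy s r}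

/-- Shannon entropy of a probability vector on `Fin d` (natural log). -/
def shEntropy {d : ℕ} (p : Fin d → ℝ) : ℝ := ∑ i, -(p i * Real.log (p i))

/-- Relative entropy between probability vectors on `Fin d`, valued in `[0,∞]`. -/
def relEntropy {d : ℕ} (p q : Fin d → ℝ) : ℝ≥0∞ :=
  if ∀ i, q i = 0 → p i = 0
  then ENNReal.ofReal (∑ i, p i * Real.log (p i / q i))
  else ⊤

/-- `N(d) = sup_{0<r<1/2} r(1-r) (log(((1-r)/r)(d-1)))²`. -/
def Nfun (d : ℕ) : ℝ :=
  sSup {v : ℝ | ∃ r : ℝ, 0 < r ∧ r < 1/2 ∧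
    v = r * (1 - r) * (Real.log ((1 - r) / r * ((d:ℝ) - 1)))^2}

/-!
Write the constraint with the `d`-ary entropy `H_d x = H₂ x + x log (d - 1)`, which increases
strictly from `0` to `log d` on `[0, 1 - 1/d]`: it reads `H_d s - H_d r = Δ`. Replacing `d` by
`d' > d` adds `(s - r) (log (d' - 1) - log (d - 1))` to the left side, an error of the same sign as
`Δ`, so by the intermediate value theorem one of `s`, `r` can be moved strictly towards the other
to restore the constraint in dimension `d'`; and `D₂(s‖r)` strictly decreases when either argument
moves towards the other. This gives `M(Δ, d') ≤ M(Δ, d)`.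

For strictness when `Δ ≠ 0`, it suffices that `M(Δ, d)` is attained when it is finite. Admissible
pairs stay away from `(0, 0)`, so along them `D₂(s‖r) ≥ -s log r - log 2` blows up as `r → 0`, and
the infimum is a minimum over a compact set on which `D₂` is continuous. If `M(Δ, d) = ∞`, then
`Δ < log d'` yields an admissible pair of finite divergence in dimension `d'`.
-/

open Real Set Function

lemma binEntropy'_eq_binEntropy (x : ℝ) : binEntropy' x = binEntropy x := by
  simp only [binEntropy', binEntropy, log_inv]
  ring

lemma qaryEntropy_eq_binEntropy'_add (d : ℕ) (x : ℝ) :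
    qaryEntropy d x = binEntropy' x + x * log ((d : ℝ) - 1) := by
  simp only [qaryEntropy, binEntropy'_eq_binEntropy]
  push_cast
  ring

lemma qaryEntropy_one_sub_one_div {d : ℕ} (hd : 2 ≤ d) :
    qaryEntropy d (1 - 1 / d) = log d := by
  have hd₁ : (1 : ℝ) < d := by exact_mod_cast hd
  have hd₀ : (d : ℝ) ≠ 0 := by positivity
  have h₁ : (1 : ℝ) - 1 / d = ((d : ℝ) - 1) / d := by field_simp
  have h₂ : (1 : ℝ) - ((d : ℝ) - 1) / d = 1 / d := by field_simp; ring
  rw [qaryEntropy_eq_binEntropy'_add, binEntropy', h₁, h₂,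
    log_div (by linarith) hd₀, one_div, log_inv]
  field_simp
  ring

lemma qaryEntropy_sub_lt_qaryEntropy_sub {d d' : ℕ} (hd : 2 ≤ d) (hdd' : d < d') {a b : ℝ}
    (hab : a < b) : qaryEntropy d b - qaryEntropy d a < qaryEntropy d' b - qaryEntropy d' a := by
  have hd₁ : (1 : ℝ) < d := by exact_mod_cast hd
  have hdd'ℝ : (d : ℝ) < d' := by exact_mod_cast hdd'
  have hlog : log ((d : ℝ) - 1) < log ((d' : ℝ) - 1) := log_lt_log (by linarith) (by linarith)
  have := mul_pos (sub_pos.2 hab) (sub_pos.2 hlog)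
  simp only [qaryEntropy_eq_binEntropy'_add]
  nlinarith

lemma exists_mem_Ioo_qaryEntropy_sub_eq {d d' : ℕ} (hd : 2 ≤ d) (hdd' : d < d') {a b : ℝ}
    (ha : 0 ≤ a) (hab : a < b) (hb : b ≤ 1 - 1 / d) :
    ∃ c ∈ Ioo a b, qaryEntropy d' c - qaryEntropy d' a = qaryEntropy d b - qaryEntropy d a := by
  have hlt : qaryEntropy d a < qaryEntropy d b :=
    qaryEntropy_strictMonoOn hd ⟨ha, hab.le.trans hb⟩ ⟨ha.trans hab.le, hb⟩ hab
  have hgap := qaryEntropy_sub_lt_qaryEntropy_sub hd hdd' hab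
  exact intermediate_value_Ioo hab.le (qaryEntropy_continuous.sub continuous_const).continuousOn
    ⟨by simpa using hlt, hgap⟩

lemma exists_qaryEntropy_eq {d : ℕ} (hd : 2 ≤ d) {y : ℝ} (hy : y ∈ Icc 0 (log d)) :
    ∃ x ∈ Icc 0 (1 - 1 / (d : ℝ)), qaryEntropy d x = y := by
  have hd₁ : (2 : ℝ) ≤ d := by exact_mod_cast hd
  have ht : (0 : ℝ) ≤ 1 - 1 / d := by
    rw [sub_nonneg, div_le_one (by linarith)]
    linarith
  refine intermediate_value_Icc ht qaryEntropy_continuous.continuousOn ?_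
  rwa [qaryEntropy_zero, qaryEntropy_one_sub_one_div hd]

def binKL (s r : ℝ) : ℝ := -binEntropy s - s * log r - (1 - s) * log (1 - r)

lemma mul_log_div_eq {x y : ℝ} (hy : y ≠ 0) : x * log (x / y) = x * log x - x * log y := by
  rcases eq_or_ne x 0 with rfl | hx
  · simp
  · rw [log_div hx hy]
    ring

lemma binRelEntropy_eq_ofReal_binKL (s : ℝ) {r : ℝ} (hr₀ : 0 < r) (hr₁ : r < 1) :
    binRelEntropy s r = ENNReal.ofReal (binKL s r) := by
  rw [binRelEntropy, if_neg (by rintro (⟨h, -⟩ | ⟨h, -⟩) <;> linarith),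
    mul_log_div_eq hr₀.ne', mul_log_div_eq (sub_ne_zero.2 hr₁.ne')]
  simp only [binKL, binEntropy, log_inv]
  ring_nf

lemma binRelEntropy_zero_right {s : ℝ} (hs : 0 < s) : binRelEntropy s 0 = ⊤ :=
  if_pos (Or.inl ⟨rfl, hs⟩)

lemma pos_of_binRelEntropy_ne_top {s r : ℝ} (hs : 0 ≤ s) (hr : 0 ≤ r) (hsr : s ≠ r)
    (h : binRelEntropy s r ≠ ⊤) : 0 < r := by
  refine hr.lt_of_ne fun hr₀ => h ?_
  subst hr₀
  exact binRelEntropy_zero_right (hs.lt_of_ne hsr.symm)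

lemma mul_log_sub_mul_log_le {x y : ℝ} (hx : 0 ≤ x) (hy : 0 < y) :
    x * log y - x * log x ≤ y - x := by
  rcases hx.eq_or_lt with rfl | hx
  · simpa using hy.le
  · have h := log_le_sub_one_of_pos (div_pos hy hx)
    rw [log_div hy.ne' hx.ne'] at h
    have := mul_le_mul_of_nonneg_left h hx.le
    have hyx : x * (y / x - 1) = y - x := by field_simp
    linarith

lemma binKL_nonneg {s r : ℝ} (hs₀ : 0 ≤ s) (hs₁ : s ≤ 1) (hr₀ : 0 < r) (hr₁ : r < 1) :
    0 ≤ binKL s r := by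
  have h₁ := mul_log_sub_mul_log_le hs₀ hr₀
  have h₂ := mul_log_sub_mul_log_le (sub_nonneg.2 hs₁) (sub_pos.2 hr₁)
  simp only [binKL, binEntropy, log_inv]
  linarith

lemma neg_mul_log_sub_log_two_le_binKL {s r : ℝ} (hs : s ≤ 1) (hr₀ : 0 ≤ r) (hr₁ : r ≤ 1) :
    -(s * log r) - log 2 ≤ binKL s r := by
  have h₁ := binEntropy_le_log_two (p := s)
  have h₂ := mul_nonpos_of_nonneg_of_nonpos (sub_nonneg.2 hs)
    (log_nonpos (sub_nonneg.2 hr₁) (by linarith))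
  simp only [binKL]
  linarith

lemma binKL_strictMonoOn_left {r : ℝ} (hr : 0 < r) : StrictMonoOn (binKL · r) (Ioo r 1) := by
  have hderiv : ∀ s ∈ Ioo r 1,
      HasDerivAt (binKL · r) (-(log (1 - s) - log s) - log r - -log (1 - r)) s := by
    rintro s ⟨hrs, hs⟩
    have := ((hasDerivAt_binEntropy (by linarith) (by linarith)).neg.sub
      ((hasDerivAt_id s).mul_const (log r))).sub
      (((hasDerivAt_id s).const_sub 1).mul_const (log (1 - r)))
    exact this.congr_deriv (by ring)
  refine strictMonoOn_of_deriv_pos (convex_Ioo r 1)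
    (fun s hs => (hderiv s hs).continuousAt.continuousWithinAt) fun s hs => ?_
  rw [interior_Ioo] at hs
  rw [(hderiv s hs).deriv]
  have := log_lt_log hr hs.1
  have := log_lt_log (sub_pos.2 hs.2) (sub_lt_sub_left hs.1 1)
  linarith

lemma binKL_strictMonoOn_right {s : ℝ} (hs : 0 ≤ s) : StrictMonoOn (binKL s) (Ioo s 1) := by
  have hderiv : ∀ r ∈ Ioo s 1, HasDerivAt (binKL s) (-(s / r) + (1 - s) / (1 - r)) r := by
    rintro r ⟨hsr, hr⟩
    have := ((hasDerivAt_const r (-binEntropy s)).sub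
      ((hasDerivAt_log (by linarith)).const_mul s)).sub
      (((hasDerivAt_log (sub_ne_zero.2 hr.ne')).comp r
        ((hasDerivAt_id r).const_sub 1)).const_mul (1 - s))
    exact this.congr_deriv (by field_simp; ring)
  refine strictMonoOn_of_deriv_pos (convex_Ioo s 1)
    (fun r hr => (hderiv r hr).continuousAt.continuousWithinAt) fun r hr => ?_
  rw [interior_Ioo] at hr
  rw [(hderiv r hr).deriv]
  have := (div_lt_one (by linarith [hr.1])).2 hr.1
  have := (one_lt_div (sub_pos.2 hr.2)).2 (sub_lt_sub_left hr.1 1)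
  linarith

lemma binRelEntropy_lt_of_lt_left {r s' s : ℝ} (hr : 0 < r) (hrs' : r < s') (hs's : s' < s)
    (hs : s < 1) : binRelEntropy s' r < binRelEntropy s r := by
  have hr₁ : r < 1 := by linarith
  rw [binRelEntropy_eq_ofReal_binKL _ hr hr₁, binRelEntropy_eq_ofReal_binKL _ hr hr₁,
    ENNReal.ofReal_lt_ofReal_iff_of_nonneg (binKL_nonneg (by linarith) (by linarith) hr hr₁)]
  exact binKL_strictMonoOn_left hr ⟨hrs', by linarith⟩ ⟨by linarith, hs⟩ hs's

lemma binRelEntropy_lt_of_lt_right {s r' r : ℝ} (hs : 0 ≤ s) (hsr' : s < r') (hr'r : r' < r)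
    (hr : r < 1) : binRelEntropy s r' < binRelEntropy s r := by
  have hr'₀ : 0 < r' := by linarith
  rw [binRelEntropy_eq_ofReal_binKL _ hr'₀ (by linarith),
    binRelEntropy_eq_ofReal_binKL _ (by linarith) hr,
    ENNReal.ofReal_lt_ofReal_iff_of_nonneg (binKL_nonneg hs (by linarith) hr'₀ (by linarith))]
  exact binKL_strictMonoOn_right hs ⟨hsr', by linarith⟩ ⟨by linarith, hr⟩ hr'r

lemma continuousOn_uncurry_binRelEntropy :
    ContinuousOn (uncurry binRelEntropy) {q : ℝ × ℝ | 0 < q.2 ∧ q.2 < 1} := by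
  have hcont : ContinuousOn (fun q : ℝ × ℝ => binKL q.1 q.2) {q | 0 < q.2 ∧ q.2 < 1} :=
    ((binEntropy_continuous.comp continuous_fst).continuousOn.neg.sub
      (continuousOn_fst.mul (continuousOn_snd.log fun q hq => hq.1.ne'))).sub
      ((continuousOn_const.sub continuousOn_fst).mul
        ((continuousOn_const.sub continuousOn_snd).log fun q hq => (sub_pos.2 hq.2).ne'))
  exact (ENNReal.continuous_ofReal.comp_continuousOn hcont).congr fun q hq =>
    binRelEntropy_eq_ofReal_binKL _ hq.1 hq.2

def feasiblePairs (Δ : ℝ) (d : ℕ) : Set (ℝ × ℝ) :=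
  Icc 0 (1 - 1 / (d : ℝ)) ×ˢ Icc 0 (1 - 1 / (d : ℝ)) ∩
    {p | qaryEntropy d p.1 - qaryEntropy d p.2 = Δ}

lemma Mfun_eq_sInf_image (Δ : ℝ) {d : ℕ} (hd : d ≠ 0) :
    Mfun Δ d = sInf (uncurry binRelEntropy '' feasiblePairs Δ d) := by
  have ht : ((d : ℝ) - 1) / d = 1 - 1 / d := by field_simp
  have hconstraint (s r : ℝ) : binEntropy' s - binEntropy' r + (s - r) * log ((d : ℝ) - 1)
      = qaryEntropy d s - qaryEntropy d r := by
    rw [qaryEntropy_eq_binEntropy'_add, qaryEntropy_eq_binEntropy'_add]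
    ring
  unfold Mfun
  congr 1
  ext m
  simp only [mem_ofPred_eq, mem_image, Prod.exists, feasiblePairs, mem_inter_iff, mem_prod,
    uncurry_apply_pair, ht, hconstraint, and_assoc]
  exact exists₂_congr fun _ _ => by rw [eq_comm (a := m)]

lemma isCompact_feasiblePairs (Δ : ℝ) (d : ℕ) : IsCompact (feasiblePairs Δ d) :=
  (isCompact_Icc.prod isCompact_Icc).inter_right <| isClosed_eq (by fun_prop) continuous_const

lemma Icc_one_sub_one_div_subset {d d' : ℕ} (hd : d ≠ 0) (hdd' : d ≤ d') :
    Icc (0 : ℝ) (1 - 1 / d) ⊆ Icc 0 (1 - 1 / d') :=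
  Icc_subset_Icc_right <| sub_le_sub_left
    (one_div_le_one_div_of_le (by positivity) (by exact_mod_cast hdd')) 1

lemma one_sub_one_div_lt_one (d : ℕ) (hd : d ≠ 0) : 1 - 1 / (d : ℝ) < 1 := by
  have : (0 : ℝ) < 1 / d := by positivity
  linarith

lemma fst_ne_snd_of_mem_feasiblePairs {Δ : ℝ} {d : ℕ} (hΔ : Δ ≠ 0) {p : ℝ × ℝ}
    (hp : p ∈ feasiblePairs Δ d) : p.1 ≠ p.2 := fun h => hΔ <| by
  have hp₂ : qaryEntropy d p.1 - qaryEntropy d p.2 = Δ := hp.2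
  rw [h, sub_self] at hp₂
  exact hp₂.symm

lemma mem_feasiblePairs_of_fst_eq_snd {Δ : ℝ} {d d' : ℕ} (hd : d ≠ 0) (hdd' : d ≤ d')
    {p : ℝ × ℝ} (hp : p ∈ feasiblePairs Δ d) (hp₁₂ : p.1 = p.2) : p ∈ feasiblePairs Δ d' := by
  have hsub := Icc_one_sub_one_div_subset hd hdd'
  refine ⟨⟨hsub hp.1.1, hsub hp.1.2⟩, ?_⟩
  have hp₂ : qaryEntropy d p.1 - qaryEntropy d p.2 = Δ := hp.2
  change qaryEntropy d' p.1 - qaryEntropy d' p.2 = Δ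
  rw [hp₁₂, sub_self] at hp₂ ⊢
  exact hp₂

lemma exists_mem_feasiblePairs_binRelEntropy_lt {Δ : ℝ} {d d' : ℕ} (hd : 2 ≤ d) (hdd' : d < d')
    {p : ℝ × ℝ} (hp : p ∈ feasiblePairs Δ d) (hne : p.1 ≠ p.2) :
    ∃ q ∈ feasiblePairs Δ d',
      uncurry binRelEntropy q < uncurry binRelEntropy p ∨ uncurry binRelEntropy p = ⊤ := by
  obtain ⟨s, r⟩ := p
  obtain ⟨⟨hs, hr⟩, hΔ : qaryEntropy d s - qaryEntropy d r = Δ⟩ := hp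
  have hd₀ : d ≠ 0 := by omega
  have hsub := Icc_one_sub_one_div_subset hd₀ hdd'.le
  have ht := one_sub_one_div_lt_one d hd₀
  rcases lt_or_gt_of_ne hne with hsr | hrs
  · obtain ⟨c, ⟨hsc, hcr⟩, hc⟩ := exists_mem_Ioo_qaryEntropy_sub_eq hd hdd' hs.1 hsr hr.2
    refine ⟨(s, c), ⟨⟨hsub hs, hsub ⟨by linarith [hs.1], by linarith [hr.2]⟩⟩, ?_⟩,
      Or.inl (binRelEntropy_lt_of_lt_right hs.1 hsc hcr (by linarith [hr.2]))⟩
    change qaryEntropy d' s - qaryEntropy d' c = Δ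
    linarith
  · obtain ⟨c, ⟨hrc, hcs⟩, hc⟩ := exists_mem_Ioo_qaryEntropy_sub_eq hd hdd' hr.1 hrs hs.2
    refine ⟨(c, r), ⟨⟨hsub ⟨by linarith [hr.1], by linarith [hs.2]⟩, hsub hr⟩, hc.trans hΔ⟩, ?_⟩
    rcases hr.1.eq_or_lt with rfl | hr₀
    · exact Or.inr (binRelEntropy_zero_right hrs)
    · exact Or.inl (binRelEntropy_lt_of_lt_left hr₀ hrc hcs (by linarith [hs.2]))

lemma exists_mem_feasiblePairs_ne_top {Δ : ℝ} {d : ℕ} (hd : 2 ≤ d)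
    (hΔ : Δ ∈ Ico (-log d) (log d)) :
    ∃ p ∈ feasiblePairs Δ d, uncurry binRelEntropy p ≠ ⊤ := by
  obtain ⟨r, hr, hHr⟩ := exists_qaryEntropy_eq hd (y := (log d - Δ) / 2)
    ⟨by linarith [hΔ.2], by linarith [hΔ.1]⟩
  obtain ⟨s, hs, hHs⟩ := exists_qaryEntropy_eq hd (y := (log d + Δ) / 2)
    ⟨by linarith [hΔ.1], by linarith [hΔ.2]⟩
  have hr₀ : 0 < r := hr.1.lt_of_ne <| by
    rintro rfl
    rw [qaryEntropy_zero] at hHr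
    linarith [hΔ.2]
  refine ⟨(s, r), ⟨⟨hs, hr⟩, by change qaryEntropy d s - qaryEntropy d r = Δ; linarith⟩, ?_⟩
  rw [uncurry_apply_pair, binRelEntropy_eq_ofReal_binKL _ hr₀
    (hr.2.trans_lt (one_sub_one_div_lt_one d (by omega)))]
  exact ENNReal.ofReal_ne_top

lemma exists_pos_le_or_le_of_mem_feasiblePairs {Δ : ℝ} (d : ℕ) (hΔ : Δ ≠ 0) :
    ∃ c > 0, ∀ p ∈ feasiblePairs Δ d, c ≤ p.1 ∨ c ≤ p.2 := by
  obtain ⟨c, hc, hH⟩ := Metric.continuousAt_iff.1 (qaryEntropy_continuous (q := d)).continuousAt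
    (|Δ| / 2) (by positivity)
  refine ⟨c, hc, fun ⟨s, r⟩ ⟨⟨hs, hr⟩, hsr⟩ => ?_⟩
  by_contra! h
  have hHs := hH (x := s) (by rw [Real.dist_eq, sub_zero, abs_of_nonneg hs.1]; exact h.1)
  have hHr := hH (x := r) (by rw [Real.dist_eq, sub_zero, abs_of_nonneg hr.1]; exact h.2)
  rw [Real.dist_eq, qaryEntropy_zero, sub_zero] at hHs hHr
  have : |Δ| ≤ |qaryEntropy d s| + |qaryEntropy d r| :=
    (congrArg abs hsr).symm.le.trans (abs_sub _ _)
  linarith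

lemma exists_pos_ofReal_le_binRelEntropy {c : ℝ} (hc : 0 < c) (B : ℝ) :
    ∃ ρ > 0, ∀ s r, c ≤ s → s ≤ 1 → 0 ≤ r → r < ρ → ENNReal.ofReal B ≤ binRelEntropy s r := by
  refine ⟨min 1 (exp (-(B + log 2) / c)), by positivity, fun s r hcs hs hr hrρ => ?_⟩
  rcases hr.eq_or_lt with rfl | hr₀
  · rw [binRelEntropy_zero_right (by linarith)]
    exact le_top
  have hr₁ : r < 1 := hrρ.trans_le (min_le_left _ _)
  rw [binRelEntropy_eq_ofReal_binKL _ hr₀ hr₁]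
  refine ENNReal.ofReal_le_ofReal ?_
  have hlog : log r < -(B + log 2) / c := by
    simpa using log_lt_log hr₀ (hrρ.trans_le (min_le_right _ _))
  have hB : B + log 2 < -log r * c := by
    rw [← div_lt_iff₀ hc]
    linarith [neg_div c (B + log 2)]
  have hcs' : -log r * c ≤ -log r * s :=
    mul_le_mul_of_nonneg_left hcs (neg_nonneg.2 (log_nonpos hr hr₁.le))
  have := neg_mul_log_sub_log_two_le_binKL hs hr hr₁.le
  linarith

lemma exists_isMinOn_binRelEntropy {Δ : ℝ} {d : ℕ} (hd : 2 ≤ d) (hΔ : Δ ≠ 0) {p₁ : ℝ × ℝ}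
    (hp₁ : p₁ ∈ feasiblePairs Δ d) (hfin : uncurry binRelEntropy p₁ ≠ ⊤) :
    ∃ p ∈ feasiblePairs Δ d, IsMinOn (uncurry binRelEntropy) (feasiblePairs Δ d) p := by
  obtain ⟨s₁, r₁⟩ := p₁
  have ht := one_sub_one_div_lt_one d (by omega)
  have hr₁ : 0 < r₁ := pos_of_binRelEntropy_ne_top hp₁.1.1.1 hp₁.1.2.1
    (fst_ne_snd_of_mem_feasiblePairs hΔ hp₁) hfin
  obtain ⟨c, hc, hcF⟩ := exists_pos_le_or_le_of_mem_feasiblePairs d hΔ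
  obtain ⟨ρ₀, hρ₀, hρ₀B⟩ := exists_pos_ofReal_le_binRelEntropy hc (binKL s₁ r₁)
  set ρ := min r₁ (min c ρ₀)
  have hρc : ρ ≤ c := (min_le_right _ _).trans (min_le_left _ _)
  have hnear : ∀ q ∈ feasiblePairs Δ d, q.2 < ρ →
      uncurry binRelEntropy (s₁, r₁) ≤ uncurry binRelEntropy q := by
    rintro ⟨s, r⟩ hq (hr : r < ρ)
    have hcs : c ≤ s := (hcF _ hq).resolve_right fun h => by linarith
    obtain ⟨⟨hs, hr'⟩, -⟩ := hq
    rw [uncurry_apply_pair, uncurry_apply_pair,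
      binRelEntropy_eq_ofReal_binKL _ hr₁ (hp₁.1.2.2.trans_lt ht)]
    exact hρ₀B s r hcs (by linarith [hs.2]) hr'.1
      (hr.trans_le ((min_le_right _ _).trans (min_le_right _ _)))
  set K := feasiblePairs Δ d ∩ {q | ρ ≤ q.2}
  have hK : IsCompact K :=
    (isCompact_feasiblePairs Δ d).inter_right (isClosed_le continuous_const continuous_snd)
  have hp₁K : (s₁, r₁) ∈ K := ⟨hp₁, show ρ ≤ r₁ from min_le_left _ _⟩
  have hK_sub : K ⊆ {q | 0 < q.2 ∧ q.2 < 1} := fun q hq =>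
    ⟨(lt_min hr₁ (lt_min hc hρ₀)).trans_le hq.2, hq.1.1.2.2.trans_lt ht⟩
  obtain ⟨p, hpK, hpmin⟩ :=
    hK.exists_isMinOn ⟨_, hp₁K⟩ (continuousOn_uncurry_binRelEntropy.mono hK_sub)
  refine ⟨p, hpK.1, fun q hq => ?_⟩
  by_cases hqρ : ρ ≤ q.2
  · exact hpmin ⟨hq, hqρ⟩
  · exact (hpmin hp₁K).trans (hnear q hq (not_le.1 hqρ))

/-- `M(Δ,·)` is decreasing in the dimension, strictly so for `Δ ≠ 0`. -/
theorem Mfun_antitone_dim (d d' : ℕ) (hd : 2 ≤ d) (hdd' : d < d')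
    (Δ : ℝ) (hΔ : Δ ∈ Set.Icc (-Real.log d) (Real.log d)) :
    Mfun Δ d' ≤ Mfun Δ d ∧ (Δ ≠ 0 → Mfun Δ d' < Mfun Δ d) := by
  have hd' : 2 ≤ d' := by omega
  rw [Mfun_eq_sInf_image Δ (by omega : d ≠ 0), Mfun_eq_sInf_image Δ (by omega : d' ≠ 0)]
  refine ⟨le_sInf (forall_mem_image.2 fun p hp => ?_), fun hΔ₀ => ?_⟩
  · by_cases hne : p.1 = p.2
    · exact sInf_le <| mem_image_of_mem _ <|
        mem_feasiblePairs_of_fst_eq_snd (by omega) hdd'.le hp hne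
    · obtain ⟨q, hq, hlt⟩ := exists_mem_feasiblePairs_binRelEntropy_lt hd hdd' hp hne
      exact (sInf_le (mem_image_of_mem _ hq)).trans (hlt.elim le_of_lt fun h => h ▸ le_top)
  by_cases htop : sInf (uncurry binRelEntropy '' feasiblePairs Δ d) = ⊤
  · have hlog : log d < log d' := log_lt_log (by positivity) (by exact_mod_cast hdd')
    obtain ⟨q, hq, hq_ne⟩ :=
      exists_mem_feasiblePairs_ne_top hd' (Δ := Δ) ⟨by linarith [hΔ.1], by linarith [hΔ.2]⟩
    rw [htop]
    exact (sInf_le (mem_image_of_mem _ hq)).trans_lt hq_ne.lt_top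
  obtain ⟨_, ⟨p₁, hp₁, rfl⟩, hp₁_lt⟩ := sInf_lt_iff.1 (lt_top_iff_ne_top.2 htop)
  obtain ⟨p, hp, hmin⟩ := exists_isMinOn_binRelEntropy hd hΔ₀ hp₁ hp₁_lt.ne
  have hM : sInf (uncurry binRelEntropy '' feasiblePairs Δ d) = uncurry binRelEntropy p :=
    le_antisymm (sInf_le (mem_image_of_mem _ hp)) (le_sInf (forall_mem_image.2 hmin))
  obtain ⟨q, hq, hlt⟩ := exists_mem_feasiblePairs_binRelEntropy_lt hd hdd' hp
    (fst_ne_snd_of_mem_feasiblePairs hΔ₀ hp)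
  rw [hM]
  exact (sInf_le (mem_image_of_mem _ hq)).trans_lt (hlt.resolve_right (hM ▸ htop))

end
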